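/- arXiv:2312.00893 — 2 statements merged into one kernel-verified Lean document; each statement's English description precedes it below -/
import Mathlib

section
/- Let X be an infinite, coarsely connected space. Then every element of ℂ_u[X] acts as a bounded operator on ℓ²(X) by matrix multiplication, yielding the natural representation λ : ℂ_u[X] → B(ℓ²(X)), and λ has no nonzero invariant vectors: if ξ ∈ ℓ²(X) satisfies λ(v)ξ = λ(vv*)ξ for every partial translation v, then ξ = 0. -/
open scoped ENNReal Classical

noncomputable section

namespace GeomPropT

variable {X : Type*}

/-- The tube of diameter `R` in `X × X`. -/
def Tube (X : Type*) [EMetricSpace X] (R : ℝ≥0∞) : Set (X × X) :=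
  {p : X × X | edist p.1 p.2 ≤ R}

/-- A subset of `X × X` is controlled if it is contained in a tube of finite diameter. -/
def Controlled [EMetricSpace X] (E : Set (X × X)) : Prop :=
  ∃ R : ℝ≥0∞, R < ⊤ ∧ E ⊆ Tube X R

/-- `X` has bounded geometry if balls of any given finite radius have uniformly
bounded cardinality. -/
def BoundedGeometry (X : Type*) [EMetricSpace X] : Prop :=
  ∀ R : ℝ≥0∞, R < ⊤ → ∃ N : ℕ, ∀ x : X,
    {y : X | edist x y ≤ R}.Finite ∧ {y : X | edist x y ≤ R}.ncard ≤ N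

/-- Composition of subsets of `X × X`. -/
def compRel (E F : Set (X × X)) : Set (X × X) :=
  {p : X × X | ∃ z : X, (p.1, z) ∈ E ∧ (z, p.2) ∈ F}

/-- `compPow E n` is the `(n+1)`-fold composition `E^{∘(n+1)}`. -/
def compPow (E : Set (X × X)) : ℕ → Set (X × X)
  | 0 => E
  | n + 1 => compRel E (compPow E n)

/-- A controlled set is generating if every controlled set is contained in some
iterated composition of it. -/
def Generating [EMetricSpace X] (E : Set (X × X)) : Prop :=
  Controlled E ∧ ∀ F : Set (X × X), Controlled F → ∃ n : ℕ, F ⊆ compPow E n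

/-- `X` is monogenic if it admits a controlled generating set. -/
def Monogenic (X : Type*) [EMetricSpace X] : Prop :=
  ∃ E : Set (X × X), Generating E

/-- A "space": bounded geometry, monogenic, with at most countably many coarse
components. -/
structure IsSpace (X : Type*) [EMetricSpace X] : Prop where
  boundedGeometry : BoundedGeometry X
  monogenic : Monogenic X
  countableComponents : Set.Countable {C : Set X | ∃ x : X, C = {y : X | edist x y < ⊤}}

/-- The support of a matrix. -/
def matSupport (T : X → X → ℂ) : Set (X × X) := {p : X × X | T p.1 p.2 ≠ 0}

/-- Membership in `ℂ_u[X]`: uniformly bounded entries and controlled support. -/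
def CuElem [EMetricSpace X] (T : X → X → ℂ) : Prop :=
  (∃ M : ℝ, ∀ x y : X, ‖T x y‖ ≤ M) ∧ Controlled (matSupport T)

/-- The identity matrix. -/
def matOne : X → X → ℂ := fun x y => if x = y then 1 else 0

/-- Matrix multiplication. -/
def matMul (T S : X → X → ℂ) : X → X → ℂ := fun x y => ∑' z : X, T x z * S z y

/-- Matrix adjoint. -/
def matStar (T : X → X → ℂ) : X → X → ℂ := fun x y => starRingEnd ℂ (T y x)

/-- Matrix powers. -/
def matPow (A : X → X → ℂ) : ℕ → X → X → ℂ
  | 0 => matOne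
  | n + 1 => matMul A (matPow A n)

/-- A function `f ∈ ℓ∞(X)` viewed as a diagonal matrix. -/
def diag (f : X → ℂ) : X → X → ℂ := fun x y => if x = y then f x else 0

/-- The matrix of a partial translation: a `{0,1}`-matrix with at most one `1` in
each row and each column, and controlled support. -/
def IsPartialTranslation [EMetricSpace X] (v : X → X → ℂ) : Prop :=
  (∀ x y : X, v x y = 0 ∨ v x y = 1) ∧
  (∀ x y y' : X, v x y = 1 → v x y' = 1 → y = y') ∧
  (∀ x x' y : X, v x y = 1 → v x' y = 1 → x = x') ∧
  Controlled (matSupport v)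

/-- Membership in `S_X`: finite propagation permutation matrices. -/
def IsPermMatrix [EMetricSpace X] (A : X → X → ℂ) : Prop :=
  (∀ x y : X, A x y = 0 ∨ A x y = 1) ∧
  (∀ x : X, ∃! y : X, A x y = 1) ∧
  (∀ y : X, ∃! x : X, A x y = 1) ∧
  Controlled (matSupport A)

/-- Membership in `A_X` with common row/column sum `c`. -/
def MemAX [EMetricSpace X] (A : X → X → ℂ) (c : ℂ) : Prop :=
  CuElem A ∧ ∀ x : X, HasSum (fun y => A x y) c ∧ HasSum (fun y => A y x) c

variable {H : Type*} [NormedAddCommGroup H] [InnerProductSpace ℂ H]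

/-- A representation of `ℂ_u[X]`: a unital `*`-homomorphism into `B(H)`. -/
structure IsRepresentation [EMetricSpace X] [CompleteSpace H]
    (π : (X → X → ℂ) → (H →L[ℂ] H)) : Prop where
  map_one : π matOne = 1
  map_add : ∀ T S : X → X → ℂ, CuElem T → CuElem S → π (T + S) = π T + π S
  map_smul : ∀ (c : ℂ) (T : X → X → ℂ), CuElem T → π (c • T) = c • π T
  map_mul : ∀ T S : X → X → ℂ, CuElem T → CuElem S → π (matMul T S) = π T * π S
  map_star : ∀ T : X → X → ℂ, CuElem T → π (matStar T) = ContinuousLinearMap.adjoint (π T)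

/-- The subspace `H^π` of invariant vectors. -/
def invariantSubmodule [EMetricSpace X] (π : (X → X → ℂ) → (H →L[ℂ] H)) :
    Submodule ℂ H where
  carrier := {ξ : H | ∀ v : X → X → ℂ, IsPartialTranslation v →
    π v ξ = π (matMul v (matStar v)) ξ}
  add_mem' := by
    intro a b ha hb v hv
    simp only [map_add, ha v hv, hb v hv]
  zero_mem' := by
    intro v hv
    simp
  smul_mem' := by
    intro c ξ hξ v hv
    simp only [map_smul, hξ v hv]

/-- `p` is the orthogonal projection onto `S`. -/
def IsOrthoProjOnto (p : H →L[ℂ] H) (S : Submodule ℂ H) : Prop :=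
  ∀ ξ : H, p ξ ∈ S ∧ ξ - p ξ ∈ Sᗮ

/-- Geometric Property (T). -/
def HasPropertyT (X : Type*) [EMetricSpace X] : Prop :=
  ∀ E : Set (X × X), Generating E →
    ∃ c : ℝ, 0 < c ∧
      ∀ (H : Type) [NormedAddCommGroup H] [InnerProductSpace ℂ H] [CompleteSpace H]
        (π : (X → X → ℂ) → (H →L[ℂ] H)), IsRepresentation π →
        ∀ ξ ∈ (invariantSubmodule π)ᗮ,
          ∃ v : X → X → ℂ, IsPartialTranslation v ∧ matSupport v ⊆ E ∧
            c * ‖ξ‖ ≤ ‖π v ξ - π (matMul v (matStar v)) ξ‖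

/-- Bounded functions (elements of `ℓ∞(X)`). -/
def BddFun (f : X → ℂ) : Prop := ∃ M : ℝ, ∀ x : X, ‖f x‖ ≤ M

/-- `f ∘ t`, extended by `0`, where `t` is the partial translation with matrix `v`. -/
def translateFun (v : X → X → ℂ) (f : X → ℂ) : X → ℂ := fun y => ∑' x : X, v x y * f x

/-- An invariant mean on `ℓ∞(X)`: a positive unital linear functional invariant
under partial translations. -/
def IsInvariantMean [EMetricSpace X] (φ : (X → ℂ) → ℂ) : Prop :=
  (∀ f g : X → ℂ, BddFun f → BddFun g → φ (f + g) = φ f + φ g) ∧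
  (∀ (c : ℂ) (f : X → ℂ), BddFun f → φ (c • f) = c * φ f) ∧
  φ (fun _ => 1) = 1 ∧
  (∀ f : X → ℂ, BddFun f → (∀ x, 0 ≤ (f x).re ∧ (f x).im = 0) →
    0 ≤ (φ f).re ∧ (φ f).im = 0) ∧
  (∀ f : X → ℂ, BddFun f → ∀ v : X → X → ℂ, IsPartialTranslation v →
    (∀ x : X, f x ≠ 0 → ∃ y : X, v x y = 1) → φ (translateFun v f) = φ f)

/-- `X` is amenable if `ℓ∞(X)` admits an invariant mean. -/
def IsAmenable (X : Type*) [EMetricSpace X] : Prop :=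
  ∃ φ : (X → ℂ) → ℂ, IsInvariantMean φ

/-- A representation of `ℂ_u[X]` bundled with its Hilbert space. -/
structure HilbertRep (X : Type*) [EMetricSpace X] where
  H : Type
  [nacg : NormedAddCommGroup H]
  [ips : InnerProductSpace ℂ H]
  [cs : CompleteSpace H]
  π : (X → X → ℂ) → (H →L[ℂ] H)
  rep : IsRepresentation π

attribute [instance] HilbertRep.nacg HilbertRep.ips HilbertRep.cs

/-! Bounded geometry gives each matrix of `ℂ_u[X]` at most `N` nonzero entries in every row
and every column, all of modulus at most `M`. Cauchy–Schwarz along the rows, then counting each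
column at most `N` times (Schur's test), bounds its action on `ℓ²(X)` by `N M`.

For the second part, coarse connectedness makes the matrix unit `e_{qp}` a partial translation;
`e_{qp} e_{qp}* = e_{qq}`, so invariance of `ξ` in row `q` reads `ξ p = ξ q`. A constant
square-summable function on an infinite set vanishes. -/

section SparseMatrix

variable {ι : Type*}

lemma norm_sq_tsum_mul_le {a : ι → ℂ} {M : ℝ} (hM : ∀ y, ‖a y‖ ≤ M) {s : Finset ι}
    (hs : ∀ y, a y ≠ 0 → y ∈ s) (ξ : ι → ℂ) :
    ‖∑' y, a y * ξ y‖ ^ 2 ≤ s.card * M ^ 2 * ∑ y ∈ s, ‖ξ y‖ ^ 2 := by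
  have hsum : ∑' y, a y * ξ y = ∑ y ∈ s, a y * ξ y :=
    tsum_eq_sum fun y hy => by rw [not_imp_comm.mp (hs y) hy, zero_mul]
  calc ‖∑' y, a y * ξ y‖ ^ 2 ≤ (∑ y ∈ s, ‖a y‖ * ‖ξ y‖) ^ 2 := by
        rw [hsum]
        gcongr
        simpa only [norm_mul] using norm_sum_le s (fun y => a y * ξ y)
    _ ≤ s.card * ∑ y ∈ s, (‖a y‖ * ‖ξ y‖) ^ 2 := sq_sum_le_card_mul_sum_sq
    _ ≤ s.card * ∑ y ∈ s, M ^ 2 * ‖ξ y‖ ^ 2 := by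
        gcongr with y
        rw [mul_pow]
        gcongr
        exact hM y
    _ = s.card * M ^ 2 * ∑ y ∈ s, ‖ξ y‖ ^ 2 := by rw [← Finset.mul_sum, mul_assoc]

lemma Finset.card_le_of_subset_of_encard_le {t : Finset ι} {S : Set ι} {N : ℕ} (h : ↑t ⊆ S)
    (hS : S.encard ≤ N) : t.card ≤ N := by
  have := (Set.encard_le_encard h).trans hS
  rwa [Set.encard_coe_eq_coe_finsetCard, Nat.cast_le] at this

variable {T : ι → ι → ℂ} {M : ℝ} {N : ℕ}

lemma sum_norm_sq_tsum_mul_le (hM : ∀ x y, ‖T x y‖ ≤ M)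
    (hrow : ∀ x, {y | T x y ≠ 0}.encard ≤ N) (hcol : ∀ y, {x | T x y ≠ 0}.encard ≤ N)
    (ξ : lp (fun _ : ι => ℂ) 2) (s : Finset ι) :
    ∑ x ∈ s, ‖∑' y, T x y * ξ y‖ ^ 2 ≤ (N * M) ^ 2 * ‖ξ‖ ^ 2 := by
  set R : ι → Finset ι := fun x => (Set.finite_of_encard_le_coe (hrow x)).toFinset
  have hR : ∀ x y, y ∈ R x ↔ T x y ≠ 0 := fun x y => Set.Finite.mem_toFinset _
  have hRcard : ∀ x, (R x).card ≤ N := fun x =>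
    Finset.card_le_of_subset_of_encard_le (Set.Finite.coe_toFinset _).le (hrow x)
  have hCcard : ∀ y, (s.filter (T · y ≠ 0)).card ≤ N := fun y =>
    Finset.card_le_of_subset_of_encard_le (fun x hx => (Finset.mem_filter.mp hx).2) (hcol y)
  have hξ : ∑ y ∈ s.biUnion R, ‖ξ y‖ ^ 2 ≤ ‖ξ‖ ^ 2 := by
    simpa only [ENNReal.toReal_ofNat, Real.rpow_two] using
      lp.sum_rpow_le_norm_rpow (by norm_num) ξ (s.biUnion R)
  calc ∑ x ∈ s, ‖∑' y, T x y * ξ y‖ ^ 2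
      ≤ ∑ x ∈ s, N * M ^ 2 * ∑ y ∈ R x, ‖ξ y‖ ^ 2 := by
        refine Finset.sum_le_sum fun x _ => ?_
        refine (norm_sq_tsum_mul_le (hM x) (fun y => (hR x y).2) ξ).trans ?_
        gcongr
        exact_mod_cast hRcard x
    _ = N * M ^ 2 * ∑ y ∈ s.biUnion R, ∑ x ∈ s.filter (T · y ≠ 0), ‖ξ y‖ ^ 2 := by
        rw [← Finset.mul_sum, Finset.sum_comm' fun x y => ?_]
        simp only [Finset.mem_filter, Finset.mem_biUnion, hR]
        exact ⟨fun h => ⟨h, x, h⟩, fun h => h.1⟩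
    _ ≤ N * M ^ 2 * ∑ y ∈ s.biUnion R, N * ‖ξ y‖ ^ 2 := by
        gcongr with y
        rw [Finset.sum_const, nsmul_eq_mul]
        gcongr
        exact_mod_cast hCcard y
    _ = (N * M) ^ 2 * ∑ y ∈ s.biUnion R, ‖ξ y‖ ^ 2 := by rw [← Finset.mul_sum]; ring
    _ ≤ (N * M) ^ 2 * ‖ξ‖ ^ 2 := by gcongr

theorem exists_lp_two_matrix_action (hM : ∀ x y, ‖T x y‖ ≤ M) (hM₀ : 0 ≤ M)
    (hrow : ∀ x, {y | T x y ≠ 0}.encard ≤ N) (hcol : ∀ y, {x | T x y ≠ 0}.encard ≤ N)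
    (ξ : lp (fun _ : ι => ℂ) 2) :
    ∃ η : lp (fun _ : ι => ℂ) 2, (∀ x, η x = ∑' y, T x y * ξ y) ∧ ‖η‖ ≤ N * M * ‖ξ‖ := by
  have hbound : ∀ s : Finset ι, ∑ x ∈ s, ‖∑' y, T x y * ξ y‖ ^ (2 : ℝ≥0∞).toReal ≤
      (N * M * ‖ξ‖) ^ (2 : ℝ≥0∞).toReal := by
    simpa only [ENNReal.toReal_ofNat, Real.rpow_two, mul_pow] using
      sum_norm_sq_tsum_mul_le hM hrow hcol ξ
  refine ⟨⟨fun x => ∑' y, T x y * ξ y, memℓp_gen' hbound⟩, fun x => rfl, ?_⟩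
  exact lp.norm_le_of_forall_sum_le (by norm_num) (by positivity) hbound

end SparseMatrix

lemma BoundedGeometry.exists_encard_ball_le [EMetricSpace X] (hX : BoundedGeometry X)
    {R : ℝ≥0∞} (hR : R < ⊤) :
    ∃ N : ℕ, ∀ x : X, {y | edist x y ≤ R}.encard ≤ N := by
  obtain ⟨N, hN⟩ := hX R hR
  refine ⟨N, fun x => ?_⟩
  rw [← (hN x).1.cast_ncard_eq]
  exact_mod_cast (hN x).2

lemma BoundedGeometry.exists_encard_support_le [EMetricSpace X] (hX : BoundedGeometry X)
    {T : X → X → ℂ} (hT : Controlled (matSupport T)) :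
    ∃ N : ℕ, (∀ x, {y | T x y ≠ 0}.encard ≤ N) ∧ ∀ y, {x | T x y ≠ 0}.encard ≤ N := by
  obtain ⟨R, hR, hsupp⟩ := hT
  obtain ⟨N, hN⟩ := hX.exists_encard_ball_le hR
  refine ⟨N, fun x => (Set.encard_le_encard fun y hy => ?_).trans (hN x),
    fun y => (Set.encard_le_encard fun x hx => ?_).trans (hN y)⟩
  · exact hsupp (show (x, y) ∈ matSupport T from hy)
  · show edist y x ≤ R
    rw [edist_comm]
    exact hsupp (show (x, y) ∈ matSupport T from hx)

lemma isPartialTranslation_single [EMetricSpace X] {p q : X} (h : edist q p < ⊤) :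
    IsPartialTranslation (Matrix.single q p (1 : ℂ)) := by
  have hone : ∀ a b, Matrix.single q p (1 : ℂ) a b ≠ 0 → a = q ∧ b = p := fun a b hab => by
    by_contra hne
    exact hab (Matrix.single_apply_of_ne _ _ _ _ _ fun h => hne ⟨h.1.symm, h.2.symm⟩)
  refine ⟨fun a b => ?_, fun a b b' hb hb' => ?_, fun a a' b ha ha' => ?_, edist q p, h, ?_⟩
  · simp only [Matrix.single_apply]; split_ifs <;> simp
  · rw [(hone a b (by simp [hb])).2, (hone a b' (by simp [hb'])).2]
  · rw [(hone a b (by simp [ha])).1, (hone a' b (by simp [ha'])).1]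
  · rintro ⟨a, b⟩ hab
    obtain ⟨rfl, rfl⟩ := hone a b hab
    exact le_refl (edist a b)

lemma tsum_single_mul (q p : X) (ξ : X → ℂ) :
    ∑' y, Matrix.single q p (1 : ℂ) q y * ξ y = ξ p := by
  rw [tsum_eq_single p fun y hy => by simp [Ne.symm hy]]
  simp

lemma matMul_single_matStar_single (q p : X) :
    matMul (Matrix.single q p (1 : ℂ)) (matStar (Matrix.single q p 1)) = Matrix.single q q 1 := by
  ext a b
  unfold matMul matStar
  rw [tsum_eq_single p fun z hz => by simp [Ne.symm hz]]
  simp only [Matrix.single_apply]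
  split_ifs <;> grind

lemma lp.eq_zero_of_forall_apply_eq {ι : Type*} [Infinite ι] {E : Type*} [NormedAddCommGroup E]
    {p : ℝ≥0∞} (hp : 0 < p.toReal) (ξ : lp (fun _ : ι => E) p) (h : ∀ i j, ξ i = ξ j) : ξ = 0 := by
  obtain ⟨i₀⟩ := (inferInstance : Nonempty ι)
  have hsum := (lp.memℓp ξ).summable hp
  simp only [h _ i₀, summable_const_iff, Real.rpow_eq_zero (norm_nonneg _) hp.ne',
    norm_eq_zero] at hsum
  ext i
  rw [h i i₀, hsum, lp.coeFn_zero, Pi.zero_apply]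

lemma apply_eq_apply_of_invariant [EMetricSpace X] (hcc : ∀ x y : X, edist x y < ⊤) {ξ : X → ℂ}
    (hξ : ∀ v : X → X → ℂ, IsPartialTranslation v →
      ∀ x, ∑' y, v x y * ξ y = ∑' y, matMul v (matStar v) x y * ξ y) (p q : X) :
    ξ p = ξ q := by
  have h := hξ _ (isPartialTranslation_single (hcc q p)) q
  rwa [matMul_single_matStar_single, tsum_single_mul, tsum_single_mul] at h

/-- On an infinite coarsely connected space, every element of
`ℂ_u[X]` acts boundedly on `ℓ²(X)` by matrix multiplication, and this natural
representation has no nonzero invariant vectors. -/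
theorem statement16 {X : Type*} [EMetricSpace X] [Infinite X] (hX : IsSpace X)
    (hcc : ∀ x y : X, edist x y < ⊤) :
    (∀ T : X → X → ℂ, CuElem T → ∃ C : ℝ, 0 ≤ C ∧
      ∀ ξ : lp (fun _ : X => ℂ) 2, ∃ η : lp (fun _ : X => ℂ) 2,
        (∀ x : X, η x = ∑' y : X, T x y * ξ y) ∧ ‖η‖ ≤ C * ‖ξ‖) ∧
    (∀ ξ : lp (fun _ : X => ℂ) 2,
      (∀ v : X → X → ℂ, IsPartialTranslation v →
        ∀ x : X, ∑' y : X, v x y * ξ y = ∑' y : X, matMul v (matStar v) x y * ξ y) →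
      ξ = 0) := by
  refine ⟨fun T ⟨⟨M, hM⟩, hT⟩ => ?_, fun ξ hξ => ?_⟩
  · obtain ⟨N, hrow, hcol⟩ := hX.boundedGeometry.exists_encard_support_le hT
    have hM₀ : 0 ≤ M := (norm_nonneg _).trans (hM (Classical.arbitrary X) (Classical.arbitrary X))
    exact ⟨N * M, by positivity, exists_lp_two_matrix_action hM hM₀ hrow hcol⟩
  · exact lp.eq_zero_of_forall_apply_eq (by norm_num) ξ (apply_eq_apply_of_invariant hcc hξ)

end GeomPropT
end
end

section
/- Let X be a space, E ⊆ X×X a controlled set, and c > 0. Assume that for every representation π of ℂ_u[X] on a complex Hilbert space H and every ξ ∈ (H^π)^⊥ there is a partial translation v with supp(v) ⊆ E such that ‖π(v)ξ − π(vv*)ξ‖ ≥ c‖ξ‖. Then there exist an integer n ≥ 1 and matrices A_1, …, A_n ∈ S_X such that for every representation π of ℂ_u[X] on H and every ξ ∈ (H^π)^⊥, there is some j ∈ {1,…,n} with ‖π(A_j)ξ − ξ‖ ≥ (c/n)‖ξ‖. -/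
open scoped ENNReal Classical

noncomputable section

namespace GeomPropT

variable {X : Type*}

variable {H : Type*} [NormedAddCommGroup H] [InnerProductSpace ℂ H]

/-!
Color `X` by finitely many colors so that two `E`-neighbors of a common point always get
different colors; bounded geometry makes a greedy coloring work. For each ordered pair `p` of
colors the edges of `E` colored `p` then form a matching, and exchanging their endpoints is an
involution `σ_p` of finite propagation, with permutation matrix `P_p ∈ S_X`. A partial
translation `v` supported in `E` splits as `v = ∑_p P_p e_p + f` and `v v* = ∑_p P_p e_p P_p + f`
with diagonal projections `e_p`, `f`, so that
`π(v)ξ - π(vv*)ξ = ∑_p π(P_p) π(e_p) (ξ - π(P_p)ξ)` has norm at most `∑_p ‖π(P_p)ξ - ξ‖`.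
Among the `n = K²` matrices `P_p` one therefore moves `ξ` by at least `(c / n) ‖ξ‖`.
-/

theorem _root_.SimpleGraph.colorable_of_ncard_neighborSet_lt {V : Type*} (G : SimpleGraph V)
    {K : ℕ} (hfin : ∀ v, (G.neighborSet v).Finite) (hK : ∀ v, (G.neighborSet v).ncard < K) :
    G.Colorable K := by
  let r : V → V → Prop := WellOrderingRel
  have hwf : WellFounded r := WellOrderingRel.isWellOrder.wf
  have hfresh : ∀ v (IH : ∀ w, r w v → Fin K),
      ∃ c, ∀ w (hw : r w v), G.Adj v w → IH w hw ≠ c := by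
    intro v IH
    let used : {w // G.Adj v w ∧ r w v} → Fin K := fun w => IH w.1 w.2.2
    have : Finite {w // G.Adj v w ∧ r w v} :=
      (hfin v).subset (fun w hw => hw.1) |>.to_subtype
    have hcard : (Set.range used).ncard < Nat.card (Fin K) := calc
      (Set.range used).ncard ≤ Nat.card {w // G.Adj v w ∧ r w v} := Finite.card_range_le used
      _ = {w | G.Adj v w ∧ r w v}.ncard := Nat.card_coe_set_eq _
      _ ≤ (G.neighborSet v).ncard := Set.ncard_le_ncard (fun w hw => hw.1) (hfin v)
      _ < Nat.card (Fin K) := by simpa using hK v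
    obtain ⟨c, hc⟩ : ∃ c, c ∉ Set.range used := by
      by_contra! h
      exact hcard.ne (by rw [Set.eq_univ_of_forall h, Set.ncard_univ])
    exact ⟨c, fun w hw hadj hwc => hc ⟨⟨w, hadj, hw⟩, hwc⟩⟩
  -- Greedy coloring along a well-order: each vertex avoids the colors of its earlier neighbors.
  let col : V → Fin K := hwf.fix fun v IH => (hfresh v IH).choose
  have hcol : ∀ v w, r w v → G.Adj v w → col w ≠ col v := by
    intro v w hwv hadj
    rw [show col v = _ from hwf.fix_eq _ v]
    exact (hfresh v fun w _ => col w).choose_spec w hwv hadj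
  refine ⟨SimpleGraph.Coloring.mk col fun {v w} hadj => ?_⟩
  rcases trichotomous_of r v w with h | rfl | h
  · exact hcol w v h hadj.symm
  · exact absurd hadj G.irrefl
  · exact (hcol v w h hadj).symm

section Matrices

lemma matMul_diag_apply (T : X → X → ℂ) (f : X → ℂ) (x y : X) :
    matMul T (diag f) x y = T x y * f y := by
  rw [matMul, tsum_eq_single y fun z hz => by simp [diag, hz]]
  simp [diag]

lemma bddFun_indicator_one (s : Set X) : BddFun (s.indicator (1 : X → ℂ)) :=
  ⟨1, fun x => by by_cases hx : x ∈ s <;> simp [hx]⟩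

lemma BddFun.comp {f : X → ℂ} (hf : BddFun f) (σ : X → X) : BddFun (f ∘ σ) :=
  let ⟨M, hM⟩ := hf
  ⟨M, fun x => hM (σ x)⟩

lemma matStar_diag_indicator_mul_self (s : Set X) :
    matMul (matStar (diag (s.indicator 1))) (diag (s.indicator 1)) = diag (s.indicator 1) := by
  ext x y
  rw [matMul_diag_apply]
  by_cases hxy : x = y
  · subst hxy
    by_cases hx : x ∈ s <;> simp [matStar, diag, hx]
  · simp [matStar, diag, hxy, Ne.symm hxy]

variable [EMetricSpace X]

lemma Controlled.subset {E F : Set (X × X)} (hF : Controlled F) (h : E ⊆ F) : Controlled E :=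
  let ⟨R, hR, hFR⟩ := hF
  ⟨R, hR, h.trans hFR⟩

lemma Controlled.union {E F : Set (X × X)} (hE : Controlled E) (hF : Controlled F) :
    Controlled (E ∪ F) := by
  obtain ⟨R, hR, hER⟩ := hE
  obtain ⟨S, hS, hFS⟩ := hF
  refine ⟨max R S, max_lt hR hS, Set.union_subset (fun p hp => ?_) (fun p hp => ?_)⟩
  exacts [(hER hp).trans (le_max_left R S), (hFS hp).trans (le_max_right R S)]

lemma controlled_matSupport_diag (f : X → ℂ) : Controlled (matSupport (diag f)) := by
  refine ⟨0, ENNReal.zero_lt_top, fun p hp => ?_⟩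
  have hp : p.1 = p.2 := by
    by_contra h
    exact hp (by simp [diag, h])
  simp [Tube, hp]

lemma cuElem_diag {f : X → ℂ} (hf : BddFun f) : CuElem (diag f) := by
  obtain ⟨M, hM⟩ := hf
  refine ⟨⟨max M 0, fun x y => ?_⟩, controlled_matSupport_diag f⟩
  unfold diag
  split_ifs
  exacts [(hM x).trans (le_max_left _ _), by simp]

lemma cuElem_sum {ι : Type*} (s : Finset ι) {T : ι → X → X → ℂ} (hT : ∀ i ∈ s, CuElem (T i)) :
    CuElem (∑ i ∈ s, T i) := by
  refine Finset.sum_induction _ CuElem (fun A B hA hB => ?_) ?_ hT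
  · obtain ⟨⟨MA, hMA⟩, hA⟩ := hA
    obtain ⟨⟨MB, hMB⟩, hB⟩ := hB
    refine ⟨⟨MA + MB, fun x y => (norm_add_le _ _).trans (add_le_add (hMA x y) (hMB x y))⟩,
      (hA.union hB).subset fun p hp => ?_⟩
    by_contra h
    simp_all [matSupport]
  · exact ⟨⟨0, by simp⟩, controlled_matSupport_diag 0 |>.subset fun p hp => absurd rfl hp⟩

lemma cuElem_matStar {T : X → X → ℂ} (hT : CuElem T) : CuElem (matStar T) := by
  obtain ⟨⟨M, hM⟩, R, hR, hTR⟩ := hT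
  refine ⟨⟨M, fun x y => by simpa [matStar] using hM y x⟩, R, hR, fun p hp => ?_⟩
  have : (p.2, p.1) ∈ matSupport T := by simpa [matSupport, matStar] using hp
  simpa [Tube, edist_comm] using hTR this

lemma cuElem_matMul_diag {T : X → X → ℂ} {f : X → ℂ} (hT : CuElem T) (hf : BddFun f) :
    CuElem (matMul T (diag f)) := by
  obtain ⟨⟨M, hM⟩, hTc⟩ := hT
  obtain ⟨N, hN⟩ := hf
  refine ⟨⟨M * N, fun x y => ?_⟩, hTc.subset fun p hp => ?_⟩
  · rw [matMul_diag_apply, norm_mul]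
    exact mul_le_mul (hM x y) (hN y) (norm_nonneg _) ((norm_nonneg _).trans (hM x y))
  · have hp : T p.1 p.2 * f p.2 ≠ 0 := by rwa [← matMul_diag_apply]
    exact left_ne_zero_of_mul hp

end Matrices

section PermMatOf

def permMatOf (σ : X → X) : X → X → ℂ := fun x y => if σ y = x then 1 else 0

lemma matMul_permMatOf_apply (T : X → X → ℂ) (σ : X → X) (x y : X) :
    matMul T (permMatOf σ) x y = T x (σ y) := by
  rw [matMul, tsum_eq_single (σ y) fun z hz => by simp [permMatOf, Ne.symm hz]]
  simp [permMatOf]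

lemma matStar_permMatOf_mul_self {σ : X → X} (hσ : σ.Injective) :
    matMul (matStar (permMatOf σ)) (permMatOf σ) = matOne := by
  ext x y
  simp [matMul_permMatOf_apply, matStar, permMatOf, matOne, hσ.eq_iff]

lemma permMatOf_mul_diag_mul_permMatOf {σ : X → X} (hσ : σ.Involutive) (f : X → ℂ) :
    matMul (matMul (permMatOf σ) (diag f)) (permMatOf σ) = diag (f ∘ σ) := by
  ext x y
  by_cases hxy : x = y <;>
    simp [matMul_permMatOf_apply, matMul_diag_apply, permMatOf, hσ y, diag, hxy, eq_comm]

variable [EMetricSpace X]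

lemma isPermMatrix_permMatOf {σ : X → X} (hσ : σ.Bijective) {R : ℝ≥0∞} (hR : R < ⊤)
    (hσR : ∀ x, edist (σ x) x ≤ R) : IsPermMatrix (permMatOf σ) := by
  refine ⟨fun x y => ?_, fun x => ?_, fun y => ?_, R, hR, fun p hp => ?_⟩
  · unfold permMatOf; split_ifs <;> simp
  · obtain ⟨y, rfl⟩ := hσ.2 x
    exact ⟨y, by simp [permMatOf], fun y' hy' => hσ.1 (by simpa [permMatOf] using hy')⟩
  · exact ⟨σ y, by simp [permMatOf], fun x hx => by simpa [permMatOf, eq_comm] using hx⟩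
  · have hp : σ p.2 = p.1 := by by_contra h; exact hp (by simp [permMatOf, h])
    simpa [Tube, ← hp] using hσR p.2

lemma IsPermMatrix.cuElem {A : X → X → ℂ} (hA : IsPermMatrix A) : CuElem A :=
  ⟨⟨1, fun x y => by rcases hA.1 x y with h | h <;> simp [h]⟩, hA.2.2.2⟩

end PermMatOf

namespace IsRepresentation

variable [EMetricSpace X] [CompleteSpace H] {π : (X → X → ℂ) → (H →L[ℂ] H)}

lemma map_sum (hπ : IsRepresentation π) {ι : Type*} (s : Finset ι) {T : ι → X → X → ℂ}
    (hT : ∀ i ∈ s, CuElem (T i)) : π (∑ i ∈ s, T i) = ∑ i ∈ s, π (T i) := by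
  classical
  induction s using Finset.induction_on with
  | empty => simpa using hπ.map_smul 0 0 (cuElem_sum ∅ (T := T) (by simp))
  | insert a s ha ih =>
    have hs : ∀ i ∈ s, CuElem (T i) := fun i hi => hT i (Finset.mem_insert_of_mem hi)
    rw [Finset.sum_insert ha, Finset.sum_insert ha,
      hπ.map_add _ _ (hT a (Finset.mem_insert_self a s)) (cuElem_sum s hs), ih hs]

lemma norm_apply_sq (hπ : IsRepresentation π) {T : X → X → ℂ} (hT : CuElem T) (ξ : H) :
    ‖π T ξ‖ ^ 2 = RCLike.re (inner ℂ (π (matMul (matStar T) T) ξ) ξ) := by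
  rw [hπ.map_mul _ _ (cuElem_matStar hT) hT, hπ.map_star T hT]
  exact ContinuousLinearMap.apply_norm_sq_eq_inner_adjoint_left (π T) ξ

lemma norm_apply_of_isometry (hπ : IsRepresentation π) {A : X → X → ℂ} (hA : CuElem A)
    (hAA : matMul (matStar A) A = matOne) (ξ : H) : ‖π A ξ‖ = ‖ξ‖ := by
  have h := hπ.norm_apply_sq hA ξ
  rw [hAA, hπ.map_one, one_apply_eq_self, inner_self_eq_norm_sq] at h
  exact (sq_eq_sq₀ (norm_nonneg _) (norm_nonneg _)).1 h

lemma norm_apply_le_of_projection (hπ : IsRepresentation π) {e : X → X → ℂ} (he : CuElem e)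
    (hee : matMul (matStar e) e = e) (ξ : H) : ‖π e ξ‖ ≤ ‖ξ‖ := by
  have h := hπ.norm_apply_sq he ξ
  rw [hee] at h
  have : ‖π e ξ‖ ^ 2 ≤ ‖π e ξ‖ * ‖ξ‖ := h ▸ re_inner_le_norm _ _
  nlinarith [norm_nonneg (π e ξ), norm_nonneg ξ]

lemma norm_apply_mul_sub_le (hπ : IsRepresentation π) {A e : X → X → ℂ} (hA : CuElem A)
    (hAA : matMul (matStar A) A = matOne) (he : CuElem e) (hee : matMul (matStar e) e = e)
    (hAe : CuElem (matMul A e)) (ξ : H) :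
    ‖π (matMul A e) ξ - π (matMul (matMul A e) A) ξ‖ ≤ ‖π A ξ - ξ‖ := calc
  _ = ‖π A (π e (ξ - π A ξ))‖ := by
    rw [hπ.map_mul _ _ hAe hA, hπ.map_mul _ _ hA he]
    simp [map_sub]
  _ = ‖π e (ξ - π A ξ)‖ := hπ.norm_apply_of_isometry hA hAA _
  _ ≤ ‖ξ - π A ξ‖ := hπ.norm_apply_le_of_projection he hee _
  _ = ‖π A ξ - ξ‖ := norm_sub_rev _ _

end IsRepresentation

section Partner

variable {C : Type*} (G : SimpleGraph X) (κ : X → C)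

def IsColoredEdge (p : C × C) (x y : X) : Prop :=
  G.Adj x y ∧ ((κ x, κ y) = p ∨ (κ y, κ x) = p)

def partner (p : C × C) (x : X) : X :=
  if h : ∃ y, IsColoredEdge G κ p x y then h.choose else x

variable {G κ} {p : C × C}

lemma IsColoredEdge.symm {x y : X} (h : IsColoredEdge G κ p x y) : IsColoredEdge G κ p y x :=
  ⟨h.1.symm, h.2.symm⟩

lemma IsColoredEdge.unique (hκ : ∀ x, (G.neighborSet x).InjOn κ) {x y y' : X}
    (h : IsColoredEdge G κ p x y) (h' : IsColoredEdge G κ p x y') : y = y' := by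
  refine hκ x h.1 h'.1 ?_
  obtain ⟨-, hp | hp⟩ := h <;> obtain ⟨-, hp' | hp'⟩ := h' <;>
    simp only [Prod.ext_iff] at hp hp' <;> grind

lemma partner_eq (hκ : ∀ x, (G.neighborSet x).InjOn κ) {x y : X}
    (h : IsColoredEdge G κ p x y) : partner G κ p x = y := by
  have hex : ∃ y, IsColoredEdge G κ p x y := ⟨y, h⟩
  rw [partner, dif_pos hex]
  exact hex.choose_spec.unique hκ h

lemma partner_eq_self_or_isColoredEdge (x : X) :
    partner G κ p x = x ∨ IsColoredEdge G κ p x (partner G κ p x) := by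
  unfold partner
  split_ifs with h
  exacts [Or.inr h.choose_spec, Or.inl rfl]

lemma partner_involutive (hκ : ∀ x, (G.neighborSet x).InjOn κ) (p : C × C) :
    (partner G κ p).Involutive := fun x => by
  rcases partner_eq_self_or_isColoredEdge (G := G) (κ := κ) (p := p) x with h | h
  · rw [h, h]
  · exact partner_eq hκ h.symm

end Partner

section RelGraph

def relGraph (E : Set (X × X)) : SimpleGraph X := SimpleGraph.fromRel fun x y => (x, y) ∈ E

variable [EMetricSpace X] {E : Set (X × X)}

lemma edist_le_of_relGraph_adj {R : ℝ≥0∞} (hER : E ⊆ Tube X R) {x y : X}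
    (h : (relGraph E).Adj x y) : edist x y ≤ R := by
  rcases h.2 with h | h
  · exact hER h
  · rw [edist_comm]; exact hER h

lemma BoundedGeometry.exists_coloring (hX : BoundedGeometry X) (hE : Controlled E) :
    ∃ K : ℕ, 0 < K ∧ ∃ κ : X → Fin K, ∀ x, ((relGraph E).neighborSet x).InjOn κ := by
  obtain ⟨R, hR, hER⟩ := hE
  obtain ⟨N, hN⟩ := hX (R + R) (ENNReal.add_lt_top.2 ⟨hR, hR⟩)
  -- Two neighbors of a common point are `2R`-close, so it suffices to color the `2R`-graph.
  let G : SimpleGraph X := SimpleGraph.fromRel fun x y => edist x y ≤ R + R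
  have hGball : ∀ x, G.neighborSet x ⊆ {y | edist x y ≤ R + R} := fun x y hy => by
    rcases hy.2 with h | h
    exacts [h, (edist_comm x y).trans_le h]
  obtain ⟨κ⟩ : G.Colorable (N + 1) :=
    G.colorable_of_ncard_neighborSet_lt (fun x => (hN x).1.subset (hGball x))
      fun x => Nat.lt_succ_of_le ((Set.ncard_le_ncard (hGball x) (hN x).1).trans (hN x).2)
  refine ⟨N + 1, N.succ_pos, κ, fun x y hy y' hy' hyy' => ?_⟩
  by_contra hne
  refine κ.valid ⟨hne, Or.inl ?_⟩ hyy'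
  calc edist y y' ≤ edist y x + edist x y' := edist_triangle _ _ _
    _ ≤ R + R := add_le_add (edist_comm x y ▸ edist_le_of_relGraph_adj hER hy)
        (edist_le_of_relGraph_adj hER hy')

variable {C : Type*} {κ : X → C}

lemma isPermMatrix_permMatOf_partner (hE : Controlled E)
    (hκ : ∀ x, ((relGraph E).neighborSet x).InjOn κ) (p : C × C) :
    IsPermMatrix (permMatOf (partner (relGraph E) κ p)) := by
  obtain ⟨R, hR, hER⟩ := hE
  refine isPermMatrix_permMatOf (partner_involutive hκ p).bijective hR fun x => ?_
  rcases partner_eq_self_or_isColoredEdge (G := relGraph E) (κ := κ) (p := p) x with h | h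
  · simp [h]
  · rw [edist_comm]; exact edist_le_of_relGraph_adj hER h.1

end RelGraph

section ColorClasses

variable {C : Type*} {E : Set (X × X)} {κ : X → C} {v : X → X → ℂ}

def colorClass (v : X → X → ℂ) (κ : X → C) (p : C × C) : Set X :=
  {y | ∃ x, v x y = 1 ∧ x ≠ y ∧ (κ x, κ y) = p}

def fixedSet (v : X → X → ℂ) : Set X := {y | v y y = 1}

lemma isColoredEdge_of_apply_eq_one (hvE : matSupport v ⊆ E) {x y : X} (h : v x y = 1)
    (hxy : x ≠ y) : IsColoredEdge (relGraph E) κ (κ x, κ y) y x :=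
  ⟨⟨hxy.symm, Or.inr (hvE (by simp [matSupport, h]))⟩, Or.inr rfl⟩

variable (hvE : matSupport v ⊆ E) (hκ : ∀ x, ((relGraph E).neighborSet x).InjOn κ)
include hvE hκ

lemma partner_eq_and_mem_colorClass_iff (p : C × C) (x y : X) :
    partner (relGraph E) κ p y = x ∧ y ∈ colorClass v κ p ↔
      v x y = 1 ∧ x ≠ y ∧ (κ x, κ y) = p := by
  constructor
  · rintro ⟨hxy, w, hw, hwy, rfl⟩
    obtain rfl : w = x := hxy ▸ (partner_eq hκ (isColoredEdge_of_apply_eq_one hvE hw hwy)).symm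
    exact ⟨hw, hwy, rfl⟩
  · rintro ⟨h, hxy, rfl⟩
    exact ⟨partner_eq hκ (isColoredEdge_of_apply_eq_one hvE h hxy), x, h, hxy, rfl⟩

lemma partner_mem_colorClass_iff (p : C × C) (x : X) :
    partner (relGraph E) κ p x ∈ colorClass v κ p ↔
      ∃ z, (v x z = 1 ∧ x ≠ z) ∧ (κ x, κ z) = p := by
  constructor
  · intro h
    obtain ⟨hx, hne, hp⟩ := (partner_eq_and_mem_colorClass_iff hvE hκ p x _).1
      ⟨partner_involutive hκ p x, h⟩
    exact ⟨_, ⟨hx, hne⟩, hp⟩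
  · rintro ⟨z, ⟨hz, hxz⟩, hp⟩
    obtain ⟨hzx, hz⟩ := (partner_eq_and_mem_colorClass_iff hvE hκ p x z).2 ⟨hz, hxz, hp⟩
    rwa [← hzx, partner_involutive hκ p]

end ColorClasses

lemma sum_ite_exists_and_eq {α ι : Type*} [Fintype ι] {P : α → Prop}
    (hP : ∀ a b, P a → P b → a = b) (f : α → ι) :
    ∑ i, (if ∃ a, P a ∧ f a = i then (1 : ℂ) else 0) = if ∃ a, P a then 1 else 0 := by
  by_cases h : ∃ a, P a
  · obtain ⟨a, ha⟩ := h
    have hiff : ∀ i, (∃ b, P b ∧ f b = i) ↔ f a = i :=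
      fun i => ⟨fun ⟨b, hb, hbi⟩ => hP a b ha hb ▸ hbi, fun hai => ⟨a, ha, hai⟩⟩
    simp [hiff, show ∃ a, P a from ⟨a, ha⟩]
  · have hnone : ∀ i, ¬∃ a, P a ∧ f a = i := fun i ⟨a, ha, _⟩ => h ⟨a, ha⟩
    simp [hnone, h]

section PartialTranslation

variable {C : Type*} [Fintype C] {E : Set (X × X)} {κ : X → C} {v : X → X → ℂ}
  [EMetricSpace X] (hv : IsPartialTranslation v)
include hv

lemma matMul_matStar_of_isPartialTranslation :
    matMul v (matStar v) = diag fun x => if ∃ z, v x z = 1 then 1 else 0 := by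
  ext x y
  by_cases hx : ∃ z, v x z = 1
  · obtain ⟨z, hz⟩ := hx
    rw [matMul, tsum_eq_single z fun z' hz' => ?_]
    · rcases hv.1 y z with h | h
      · have : x ≠ y := fun hxy => by simp_all
        simp [matStar, diag, h, hz, this]
      · obtain rfl := hv.2.2.1 x y z hz h
        simpa [matStar, diag, h] using ⟨z, hz⟩
    · rcases hv.1 x z' with h | h
      · simp [h]
      · exact absurd (hv.2.1 x z' z h hz) hz'
  · have hx0 : ∀ z, v x z = 0 := fun z => (hv.1 x z).resolve_right fun h => hx ⟨z, h⟩
    simp [matMul, diag, hx0]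

variable (hvE : matSupport v ⊆ E) (hκ : ∀ x, ((relGraph E).neighborSet x).InjOn κ)
include hvE hκ

lemma eq_sum_permMatOf_partner_mul_diag :
    v = ∑ p : C × C, matMul (permMatOf (partner (relGraph E) κ p))
      (diag ((colorClass v κ p).indicator 1)) + diag ((fixedSet v).indicator 1) := by
  ext x y
  have hterm : ∀ p : C × C, matMul (permMatOf (partner (relGraph E) κ p))
      (diag ((colorClass v κ p).indicator 1)) x y =
        if v x y = 1 ∧ x ≠ y ∧ (κ x, κ y) = p then 1 else 0 := fun p => by
    rw [matMul_diag_apply, ← if_congr (partner_eq_and_mem_colorClass_iff hvE hκ p x y) rfl rfl]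
    simp only [permMatOf, Set.indicator_apply, Pi.one_apply]
    split_ifs <;> simp_all
  simp only [Pi.add_apply, Finset.sum_apply, hterm]
  obtain rfl | hxy := eq_or_ne x y
  · rcases hv.1 x x with h | h <;> simp [h, diag, fixedSet]
  · rcases hv.1 x y with h | h <;> simp [h, hxy, diag]

lemma matMul_matStar_eq_sum_permMatOf_partner :
    matMul v (matStar v) = ∑ p : C × C, matMul (matMul (permMatOf (partner (relGraph E) κ p))
      (diag ((colorClass v κ p).indicator 1))) (permMatOf (partner (relGraph E) κ p)) +
        diag ((fixedSet v).indicator 1) := by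
  simp only [permMatOf_mul_diag_mul_permMatOf (partner_involutive hκ _)]
  rw [matMul_matStar_of_isPartialTranslation hv]
  ext x y
  have hsum : ∑ p : C × C, ((colorClass v κ p).indicator (1 : X → ℂ) ∘ partner (relGraph E) κ p) x =
      if ∃ z, v x z = 1 ∧ x ≠ z then 1 else 0 := by
    simp only [Function.comp_apply, Set.indicator_apply, partner_mem_colorClass_iff hvE hκ,
      Pi.one_apply]
    exact sum_ite_exists_and_eq (P := fun z => v x z = 1 ∧ x ≠ z)
      (fun a b ha hb => hv.2.1 x a b ha.1 hb.1) fun z => (κ x, κ z)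
  simp only [Pi.add_apply, Finset.sum_apply]
  by_cases hxy : x = y
  · subst hxy
    simp only [diag, if_true, hsum]
    by_cases hxx : v x x = 1
    · have hmoved : ¬∃ z, v x z = 1 ∧ x ≠ z := fun ⟨z, hz, hxz⟩ => hxz (hv.2.1 x x z hxx hz)
      simp [hmoved, fixedSet, hxx, show ∃ z, v x z = 1 from ⟨x, hxx⟩]
    · have hiff : (∃ z, v x z = 1) ↔ ∃ z, v x z = 1 ∧ x ≠ z :=
        ⟨fun ⟨z, hz⟩ => ⟨z, hz, fun hxz => hxx (hxz ▸ hz)⟩, fun ⟨z, hz, _⟩ => ⟨z, hz⟩⟩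
      simp [hiff, fixedSet, hxx]
  · simp [diag, hxy]

end PartialTranslation

section KeyEstimate

variable {C : Type*} [Fintype C] {E : Set (X × X)} {κ : X → C} {v : X → X → ℂ}
variable [EMetricSpace X] [CompleteSpace H] {π : (X → X → ℂ) → (H →L[ℂ] H)}

lemma IsRepresentation.norm_sub_le_sum (hπ : IsRepresentation π) (hE : Controlled E)
    (hv : IsPartialTranslation v) (hvE : matSupport v ⊆ E)
    (hκ : ∀ x, ((relGraph E).neighborSet x).InjOn κ) (ξ : H) :
    ‖π v ξ - π (matMul v (matStar v)) ξ‖ ≤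
      ∑ p : C × C, ‖π (permMatOf (partner (relGraph E) κ p)) ξ - ξ‖ := by
  set P : C × C → X → X → ℂ := fun p => permMatOf (partner (relGraph E) κ p)
  set D : C × C → X → X → ℂ := fun p => diag ((colorClass v κ p).indicator 1)
  have hP : ∀ p, CuElem (P p) := fun p => (isPermMatrix_permMatOf_partner hE hκ p).cuElem
  have hD : ∀ p, CuElem (D p) := fun p => cuElem_diag (bddFun_indicator_one _)
  have hPD : ∀ p, CuElem (matMul (P p) (D p)) :=
    fun p => cuElem_matMul_diag (hP p) (bddFun_indicator_one _)
  have hPDP : ∀ p, CuElem (matMul (matMul (P p) (D p)) (P p)) := fun p => by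
    rw [permMatOf_mul_diag_mul_permMatOf (partner_involutive hκ p)]
    exact cuElem_diag ((bddFun_indicator_one _).comp _)
  have hF : CuElem (diag ((fixedSet v).indicator 1)) := cuElem_diag (bddFun_indicator_one _)
  have hv_eq : π v = ∑ p, π (matMul (P p) (D p)) + π (diag ((fixedSet v).indicator 1)) := by
    conv_lhs => rw [eq_sum_permMatOf_partner_mul_diag hv hvE hκ]
    rw [hπ.map_add _ _ (cuElem_sum _ fun p _ => hPD p) hF, hπ.map_sum _ fun p _ => hPD p]
  have hvv_eq : π (matMul v (matStar v)) =
      ∑ p, π (matMul (matMul (P p) (D p)) (P p)) + π (diag ((fixedSet v).indicator 1)) := by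
    rw [matMul_matStar_eq_sum_permMatOf_partner hv hvE hκ,
      hπ.map_add _ _ (cuElem_sum _ fun p _ => hPDP p) hF, hπ.map_sum _ fun p _ => hPDP p]
  calc ‖π v ξ - π (matMul v (matStar v)) ξ‖
      = ‖∑ p, (π (matMul (P p) (D p)) ξ - π (matMul (matMul (P p) (D p)) (P p)) ξ)‖ := by
        simp [hv_eq, hvv_eq, Finset.sum_sub_distrib]
    _ ≤ ∑ p, ‖π (matMul (P p) (D p)) ξ - π (matMul (matMul (P p) (D p)) (P p)) ξ‖ :=
        norm_sum_le _ _
    _ ≤ ∑ p, ‖π (P p) ξ - ξ‖ := Finset.sum_le_sum fun p _ =>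
        hπ.norm_apply_mul_sub_le (hP p)
          (matStar_permMatOf_mul_self (partner_involutive hκ p).injective) (hD p)
          (matStar_diag_indicator_mul_self _) (hPD p) ξ

end KeyEstimate

theorem statement18_general {X : Type*} [EMetricSpace X] (hX : IsSpace X)
    (E : Set (X × X)) (hE : Controlled E) (c : ℝ)
    (hyp : ∀ (H : Type) [NormedAddCommGroup H] [InnerProductSpace ℂ H] [CompleteSpace H]
      (π : (X → X → ℂ) → (H →L[ℂ] H)), IsRepresentation π →
      ∀ ξ ∈ (invariantSubmodule π)ᗮ,
        ∃ v : X → X → ℂ, IsPartialTranslation v ∧ matSupport v ⊆ E ∧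
          c * ‖ξ‖ ≤ ‖π v ξ - π (matMul v (matStar v)) ξ‖) :
    ∃ n : ℕ, 1 ≤ n ∧ ∃ A : Fin n → X → X → ℂ, (∀ j, IsPermMatrix (A j)) ∧
      ∀ (H : Type) [NormedAddCommGroup H] [InnerProductSpace ℂ H] [CompleteSpace H]
        (π : (X → X → ℂ) → (H →L[ℂ] H)), IsRepresentation π →
        ∀ ξ ∈ (invariantSubmodule π)ᗮ,
          ∃ j : Fin n, (c / n) * ‖ξ‖ ≤ ‖π (A j) ξ - ξ‖ := by
  obtain ⟨K, hK, κ, hκ⟩ := hX.boundedGeometry.exists_coloring hE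
  have hn : 0 < K * K := Nat.mul_pos hK hK
  let A : Fin (K * K) → X → X → ℂ :=
    fun j => permMatOf (partner (relGraph E) κ (finProdFinEquiv.symm j))
  refine ⟨K * K, hn, A, fun j => isPermMatrix_permMatOf_partner hE hκ _, ?_⟩
  intro H _ _ _ π hπ ξ hξ
  obtain ⟨v, hv, hvE, hcv⟩ := hyp H π hπ ξ hξ
  have hsum : ∑ _j : Fin (K * K), c / (K * K : ℕ) * ‖ξ‖ ≤ ∑ j, ‖π (A j) ξ - ξ‖ := calc
    _ = c * ‖ξ‖ := by
      rw [Finset.sum_const, Finset.card_univ, Fintype.card_fin, nsmul_eq_mul]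
      field_simp
    _ ≤ ∑ p : Fin K × Fin K, ‖π (permMatOf (partner (relGraph E) κ p)) ξ - ξ‖ :=
      hcv.trans (hπ.norm_sub_le_sum hE hv hvE hκ ξ)
    _ = ∑ j, ‖π (A j) ξ - ξ‖ := (finProdFinEquiv.symm.sum_comp _).symm
  obtain ⟨j, -, hj⟩ := Finset.exists_le_of_sum_le ⟨⟨0, hn⟩, Finset.mem_univ _⟩ hsum
  exact ⟨j, hj⟩

/-- If the Kazhdan inequality with constant `c` holds for partial
translations supported in a controlled set `E`, then there are finitely many
permutation matrices `A_1, …, A_n ∈ S_X` such that for every representation and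
every `ξ ⊥ H^π`, some `A_j` satisfies `‖π(A_j)ξ - ξ‖ ≥ (c/n)‖ξ‖`. -/
theorem statement18 {X : Type*} [EMetricSpace X] (hX : IsSpace X)
    (E : Set (X × X)) (hE : Controlled E) (c : ℝ) (hc : 0 < c)
    (hyp : ∀ (H : Type) [NormedAddCommGroup H] [InnerProductSpace ℂ H] [CompleteSpace H]
      (π : (X → X → ℂ) → (H →L[ℂ] H)), IsRepresentation π →
      ∀ ξ ∈ (invariantSubmodule π)ᗮ,
        ∃ v : X → X → ℂ, IsPartialTranslation v ∧ matSupport v ⊆ E ∧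
          c * ‖ξ‖ ≤ ‖π v ξ - π (matMul v (matStar v)) ξ‖) :
    ∃ n : ℕ, 1 ≤ n ∧ ∃ A : Fin n → X → X → ℂ, (∀ j, IsPermMatrix (A j)) ∧
      ∀ (H : Type) [NormedAddCommGroup H] [InnerProductSpace ℂ H] [CompleteSpace H]
        (π : (X → X → ℂ) → (H →L[ℂ] H)), IsRepresentation π →
        ∀ ξ ∈ (invariantSubmodule π)ᗮ,
          ∃ j : Fin n, (c / n) * ‖ξ‖ ≤ ‖π (A j) ξ - ξ‖ :=
  statement18_general hX E hE c hyp

end GeomPropT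
end
end
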